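/- Let c : S → ℕ be a count function on a finite set S with total count n = ∑ c(s) ≥ 1, representing a particle filter. Define the empirical entropy H_n = -∑_{s ∈ S} (c(s)/n) · log(c(s)/n) (with convention 0·log 0 = 0). If one new particle is added in state x (so the new counts are c' with c'(x) = c(x)+1 and c'(s) = c(s) otherwise, total n+1), and c_x = c(x), then the new entropy satisfies H_{n+1} = (-1/(n+1)) · [c_x·(log(c_x+1) − log c_x) + log(c_x+1) + n·log n − (n+1)·log(n+1)] + n·H_n/(n+1), where the term c_x·(log(c_x+1) − log c_x) is interpreted as 0 when c_x = 0. -/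
import Mathlib


open Finset

/-- Empirical (Shannon) entropy of a particle filter given by counts `c`,
with total `n = ∑ c s`, using the convention `0 · log 0 = 0`
(automatic since `Real.log 0 = 0`). -/
noncomputable def empEntropy {S : Type*} [Fintype S] (c : S → ℕ) : ℝ :=
  -∑ s : S, ((c s : ℝ) / (∑ t : S, (c t : ℝ))) *
      Real.log ((c s : ℝ) / (∑ t : S, (c t : ℝ)))

lemma empEntropy_eq {S : Type*} [Fintype S] (c : S → ℕ)
    (hn : (∑ t : S, (c t : ℝ)) ≠ 0) :
    empEntropy c =
      (-(∑ s : S, (c s : ℝ) * Real.log (c s))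
        + (∑ t : S, (c t : ℝ)) * Real.log (∑ t : S, (c t : ℝ))) /
        (∑ t : S, (c t : ℝ)) := by
  set N : ℝ := ∑ t : S, (c t : ℝ) with hN
  have key : ∀ s : S, ((c s : ℝ) / N) * Real.log ((c s : ℝ) / N)
      = ((c s : ℝ) * Real.log (c s) - (c s : ℝ) * Real.log N) / N := by
    intro s
    by_cases h : (c s : ℝ) = 0
    · simp [h]
    · rw [Real.log_div h hn]; ring
  unfold empEntropy
  rw [← hN]
  rw [Finset.sum_congr rfl fun s _ => key s, ← Finset.sum_div,
    Finset.sum_sub_distrib, ← Finset.sum_mul, ← hN]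
  field_simp
  ring

lemma sum_update_real {S : Type*} [Fintype S] [DecidableEq S]
    (c : S → ℕ) (x : S) (F : ℕ → ℝ) :
    ∑ t : S, F (Function.update c x (c x + 1) t)
      = ∑ t : S, F (c t) - F (c x) + F (c x + 1) := by
  rw [← Finset.add_sum_erase _ (fun t => F (Function.update c x (c x + 1) t))
      (Finset.mem_univ x),
    ← Finset.add_sum_erase _ (fun t => F (c t)) (Finset.mem_univ x)]
  have : ∀ t ∈ Finset.univ.erase x,
      F (Function.update c x (c x + 1) t) = F (c t) := by
    intro t ht
    rw [Function.update_of_ne (Finset.ne_of_mem_erase ht)]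
  rw [Finset.sum_congr rfl this, Function.update_self]
  ring

/-- Proposition 1: O(1) entropy update after adding one particle in state `x`. -/
theorem entropy_update {S : Type*} [Fintype S] [DecidableEq S]
    (c : S → ℕ) (x : S) (hn : 1 ≤ ∑ s : S, c s) :
    let n : ℝ := (∑ s : S, c s : ℕ)
    let cx : ℝ := c x
    empEntropy (Function.update c x (c x + 1)) =
      (-1 / (n + 1)) *
        (cx * (Real.log (cx + 1) - Real.log cx) + Real.log (cx + 1)
          + n * Real.log n - (n + 1) * Real.log (n + 1))
      + n * empEntropy c / (n + 1) := by
  intro n cx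
  have hncast : n = ∑ t : S, (c t : ℝ) := by
    simp [n, Nat.cast_sum]
  have hnpos : (0 : ℝ) < n := by
    have : (1 : ℝ) ≤ n := by simp only [n]; exact_mod_cast hn
    linarith
  have hn0 : (∑ t : S, (c t : ℝ)) ≠ 0 := by rw [← hncast]; exact ne_of_gt hnpos
  have hsum' : ∑ t : S, ((Function.update c x (c x + 1) t : ℕ) : ℝ) = n + 1 := by
    rw [sum_update_real c x (fun k => (k : ℝ))]
    push_cast
    rw [← hncast]; ring
  have hterm : ∑ s : S, ((Function.update c x (c x + 1) s : ℕ) : ℝ) *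
      Real.log (Function.update c x (c x + 1) s)
      = ∑ s : S, (c s : ℝ) * Real.log (c s)
        - (c x : ℝ) * Real.log (c x) + ((c x : ℝ) + 1) * Real.log ((c x : ℝ) + 1) := by
    rw [sum_update_real c x (fun k => (k : ℝ) * Real.log k)]
    push_cast
    ring
  have hn1 : n + 1 ≠ 0 := by linarith
  rw [empEntropy_eq (Function.update c x (c x + 1)) (by rw [hsum']; exact hn1),
    empEntropy_eq c hn0, hterm, hsum', ← hncast]
  have hcx : (c x : ℝ) = cx := rfl
  rw [hcx]
  field_simp
  ring
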